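/- arXiv:2212.01150 — 6 statements merged into one kernel-verified Lean document; each statement's English description precedes it below -/
import Mathlib

section
/- Let T > 0, w₀, w₁ ∈ ℝ², let w(τ) := e^τ A + e^{−τ} B, and set E' := −2⟨A, B⟩. Then ∫₀^T ‖w'(τ)‖ √(2E' + ‖w(τ)‖²) dτ = (1/2) · (e^T + e^{−T})/(e^T − e^{−T}) · (‖w₀‖² + ‖w₁‖²) − 2⟨w₀, w₁⟩/(e^T − e^{−T}) + T·E'. -/
/-!
Energy conservation `2E' + ‖w‖² = ‖w'‖²` turns the integrand into `‖w'‖²`. Since `w'' = w`,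
`(⟨w, w'⟩ / 2)' = (‖w'‖² + ‖w‖²) / 2 = ‖w'‖² - E'`, so the integral is
`(⟨w(T), w'(T)⟩ - ⟨w(0), w'(0)⟩) / 2 + T E'`. With `s = e^T - e^{-T}` and `c = e^T + e^{-T}` the
boundary velocities are `w'(0) = s⁻¹ (2 w₁ - c w₀)` and `w'(T) = s⁻¹ (c w₁ - 2 w₀)`.
-/

open Real
open scoped RealInnerProductSpace

variable {E : Type*} [NormedAddCommGroup E] [InnerProductSpace ℝ E]

lemma hasDerivAt_exp_smul_add_exp_neg_smul (A B : E) (τ : ℝ) :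
    HasDerivAt (fun t => exp t • A + exp (-t) • B) (exp τ • A - exp (-τ) • B) τ := by
  refine (((hasDerivAt_exp τ).smul_const A).add
    ((hasDerivAt_neg τ).exp.smul_const B)).congr_deriv ?_
  rw [mul_neg_one, neg_smul, sub_eq_add_neg]

lemma hasDerivAt_exp_smul_sub_exp_neg_smul (A B : E) (τ : ℝ) :
    HasDerivAt (fun t => exp t • A - exp (-t) • B) (exp τ • A + exp (-τ) • B) τ := by
  simpa [sub_eq_add_neg] using hasDerivAt_exp_smul_add_exp_neg_smul A (-B) τ

lemma norm_exp_smul_sub_exp_neg_smul_sq (A B : E) (τ : ℝ) :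
    ‖exp τ • A - exp (-τ) • B‖ ^ 2 = 2 * (-2 * ⟪A, B⟫) + ‖exp τ • A + exp (-τ) • B‖ ^ 2 := by
  have h : ⟪exp τ • A, exp (-τ) • B⟫ = ⟪A, B⟫ := by
    rw [real_inner_smul_left, real_inner_smul_right, ← mul_assoc, ← exp_add, add_neg_cancel,
      exp_zero, one_mul]
  rw [norm_sub_sq_real, norm_add_sq_real, h]
  ring

lemma integral_norm_exp_smul_sub_exp_neg_smul_sq (A B : E) (T : ℝ) :
    ∫ τ in (0 : ℝ)..T, ‖exp τ • A - exp (-τ) • B‖ ^ 2 =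
      (⟪exp T • A + exp (-T) • B, exp T • A - exp (-T) • B⟫ - ⟪A + B, A - B⟫) / 2
        + T * (-2 * ⟪A, B⟫) := by
  have antideriv : ∀ τ, HasDerivAt
      (fun t => ⟪exp t • A + exp (-t) • B, exp t • A - exp (-t) • B⟫ / 2 + t * (-2 * ⟪A, B⟫))
      (‖exp τ • A - exp (-τ) • B‖ ^ 2) τ := by
    intro τ
    refine ((((hasDerivAt_exp_smul_add_exp_neg_smul A B τ).inner ℝ
      (hasDerivAt_exp_smul_sub_exp_neg_smul A B τ)).div_const 2).add
      ((hasDerivAt_id τ).mul_const (-2 * ⟪A, B⟫))).congr_deriv ?_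
    rw [real_inner_self_eq_norm_sq, real_inner_self_eq_norm_sq,
      norm_exp_smul_sub_exp_neg_smul_sq A B τ]
    ring
  rw [intervalIntegral.integral_eq_sub_of_hasDerivAt (fun τ _ => antideriv τ)
    (by apply Continuous.intervalIntegrable; fun_prop)]
  simp only [neg_mul, mul_neg, exp_zero, one_smul, neg_zero, zero_mul, add_zero]
  ring

/-- Explicit computation of the regularized Jacobi length of a Keplerian hyperbola in the
Levi-Civita plane: for the harmonic repulsor solution `w(τ) = e^τ A + e^{-τ} B` with
`w(0) = w₀`, `w(T) = w₁` and energy `E' = -2⟨A, B⟩`,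
`∫₀^T ‖w'‖ √(2E' + ‖w‖²) dτ
  = (1/2)(e^T + e^{-T})/(e^T - e^{-T}) (‖w₀‖² + ‖w₁‖²) - 2⟨w₀,w₁⟩/(e^T - e^{-T}) + T E'`. -/
theorem levi_civita_jacobi_length (T : ℝ) (hT : 0 < T)
    (w₀ w₁ : EuclideanSpace ℝ (Fin 2)) :
    let A : EuclideanSpace ℝ (Fin 2) :=
      (Real.exp T - Real.exp (-T))⁻¹ • (w₁ - Real.exp (-T) • w₀)
    let B : EuclideanSpace ℝ (Fin 2) :=
      (Real.exp T - Real.exp (-T))⁻¹ • (Real.exp T • w₀ - w₁)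
    let w : ℝ → EuclideanSpace ℝ (Fin 2) := fun τ => Real.exp τ • A + Real.exp (-τ) • B
    let E' : ℝ := -2 * (inner ℝ A B : ℝ)
    ∫ τ in (0:ℝ)..T, ‖deriv w τ‖ * Real.sqrt (2 * E' + ‖w τ‖^2) =
      (1/2) * ((Real.exp T + Real.exp (-T)) / (Real.exp T - Real.exp (-T)))
          * (‖w₀‖^2 + ‖w₁‖^2)
        - 2 * (inner ℝ w₀ w₁ : ℝ) / (Real.exp T - Real.exp (-T)) + T * E' := by
  intro A B w E'
  have hs : exp T - exp (-T) ≠ 0 := (sub_pos.2 (exp_lt_exp.2 (by linarith))).ne'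
  have integrand (τ : ℝ) :
      ‖deriv w τ‖ * √(2 * E' + ‖w τ‖ ^ 2) = ‖exp τ • A - exp (-τ) • B‖ ^ 2 := by
    rw [(hasDerivAt_exp_smul_add_exp_neg_smul A B τ).deriv,
      ← norm_exp_smul_sub_exp_neg_smul_sq, sqrt_sq (norm_nonneg _), sq]
  have w_zero : A + B = w₀ := by
    simp only [A, B]
    match_scalars <;> field_simp <;> ring
  have w_T : exp T • A + exp (-T) • B = w₁ := by
    simp only [A, B]
    match_scalars <;> field_simp <;> ring
  have v_zero : A - B = (exp T - exp (-T))⁻¹ • ((2 : ℝ) • w₁ - (exp T + exp (-T)) • w₀) := by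
    simp only [A, B]
    module
  have v_T : exp T • A - exp (-T) • B =
      (exp T - exp (-T))⁻¹ • ((exp T + exp (-T)) • w₁ - (2 : ℝ) • w₀) := by
    have he : exp T * exp (-T) = 1 := by rw [← exp_add, add_neg_cancel, exp_zero]
    simp only [A, B]
    match_scalars
    · ring
    · field_simp
      linear_combination -2 * he
  simp_rw [integrand]
  rw [integral_norm_exp_smul_sub_exp_neg_smul_sq, w_zero, w_T, v_zero, v_T]
  simp only [inner_smul_right, inner_sub_right, real_inner_self_eq_norm_sq, real_inner_comm w₀ w₁]
  field_simp
  ring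
end

section
/- Let T > 0 and w₀, w₁ ∈ ℝ², set A := (e^T − e^{−T})⁻¹ (w₁ − e^{−T} w₀), B := (e^T − e^{−T})⁻¹ (e^T w₀ − w₁), and suppose E' := −2⟨A, B⟩ > 0. Then (e^T + e^{−T})/2 = −⟨w₀, w₁⟩/(2E') + √( (‖w₀‖² + ‖w₁‖²)/(2E') + (⟨w₀, w₁⟩/(2E'))² + 1 ). -/
/-!
Writing `d = e^T - e^{-T} = 2 sinh T` and using `e^T e^{-T} = 1`, one finds
`⟨A, B⟩ = (2 cosh T ⟨w₀, w₁⟩ - ‖w₀‖² - ‖w₁‖²) / d²`, so with `sinh² T = cosh² T - 1`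
the definition of `E'` becomes the quadratic relation
`2E'(y² - 1) = ‖w₀‖² + ‖w₁‖² - 2⟨w₀, w₁⟩ y` for `y = cosh T`. Since `y ≥ 1` and
`‖w₀‖² + ‖w₁‖² ≥ -2⟨w₀, w₁⟩`, the relation forces `y + ⟨w₀, w₁⟩/(2E') ≥ 0`, so `y` is
the larger root.
-/

open Real

section InnerProductSpace

variable {F : Type*} [NormedAddCommGroup F] [InnerProductSpace ℝ F]

theorem neg_two_inner_le_norm_sq_add_norm_sq (x y : F) :
    -2 * inner ℝ x y ≤ ‖x‖ ^ 2 + ‖y‖ ^ 2 := by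
  nlinarith [norm_add_sq_real x y, sq_nonneg ‖x + y‖]

-- Both sides vanish when `sinh T = 0`, thanks to `0⁻¹ = 0` and `x / 0 = 0`.
theorem inner_arc_coefficients (T : ℝ) (w₀ w₁ : F) :
    inner ℝ ((exp T - exp (-T))⁻¹ • (w₁ - exp (-T) • w₀))
        ((exp T - exp (-T))⁻¹ • (exp T • w₀ - w₁)) =
      (2 * cosh T * inner ℝ w₀ w₁ - (‖w₀‖ ^ 2 + ‖w₁‖ ^ 2)) / (2 * sinh T) ^ 2 := by
  have hexp : exp T * exp (-T) = 1 := by rw [← exp_add, add_neg_cancel, exp_zero]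
  have hd : exp T - exp (-T) = 2 * sinh T := by rw [sinh_eq]; ring
  have hinner : inner ℝ (w₁ - exp (-T) • w₀) (exp T • w₀ - w₁) =
      2 * cosh T * inner ℝ w₀ w₁ - (‖w₀‖ ^ 2 + ‖w₁‖ ^ 2) := by
    simp only [inner_sub_left, inner_sub_right, real_inner_smul_left, real_inner_smul_right,
      real_inner_self_eq_norm_sq, real_inner_comm w₀ w₁, cosh_eq]
    linear_combination (-‖w₀‖ ^ 2) * hexp
  rw [real_inner_smul_left, real_inner_smul_right, hinner, hd]
  ring

theorem energy_mul_cosh_sq_sub_one {T : ℝ} (hT : sinh T ≠ 0) (w₀ w₁ : F) {E' : ℝ}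
    (hE' : E' = -2 * inner ℝ ((exp T - exp (-T))⁻¹ • (w₁ - exp (-T) • w₀))
      ((exp T - exp (-T))⁻¹ • (exp T • w₀ - w₁))) :
    2 * E' * (cosh T ^ 2 - 1) = ‖w₀‖ ^ 2 + ‖w₁‖ ^ 2 - 2 * inner ℝ w₀ w₁ * cosh T := by
  rw [hE', inner_arc_coefficients, cosh_sq]
  field_simp
  ring

end InnerProductSpace

theorem eq_neg_div_add_sqrt_of_mul_sq_sub_one {a p N y : ℝ} (ha : 0 < a) (hy : 1 ≤ y)
    (hN : -2 * p ≤ N) (h : a * (y ^ 2 - 1) = N - 2 * p * y) :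
    y = -p / a + √(N / a + (p / a) ^ 2 + 1) := by
  have hroot : 0 ≤ y + p / a := by
    have hnum : 0 ≤ a * y + p := by nlinarith
    rw [show y + p / a = (a * y + p) / a by field_simp]
    exact div_nonneg hnum ha.le
  have hsq : N / a + (p / a) ^ 2 + 1 = (y + p / a) ^ 2 := by
    field_simp
    linear_combination (-a) * h
  rw [hsq, sqrt_sq hroot]
  ring

/-- For the harmonic repulsor arc with endpoints `w₀, w₁`, transit time `T` and positive
energy `E' = -2⟨A, B⟩`, the quantity `cosh T = (e^T + e^{-T})/2` equals the positive root
of the quadratic relation `2E'(y² - 1) = ‖w₀‖² + ‖w₁‖² - 2⟨w₀, w₁⟩ y`, namely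
`y = -⟨w₀,w₁⟩/(2E') + √((‖w₀‖² + ‖w₁‖²)/(2E') + (⟨w₀,w₁⟩/(2E'))² + 1)`. -/
theorem levi_civita_cosh_formula (T : ℝ) (hT : 0 < T)
    (w₀ w₁ : EuclideanSpace ℝ (Fin 2))
    (A B : EuclideanSpace ℝ (Fin 2))
    (hA : A = (Real.exp T - Real.exp (-T))⁻¹ • (w₁ - Real.exp (-T) • w₀))
    (hB : B = (Real.exp T - Real.exp (-T))⁻¹ • (Real.exp T • w₀ - w₁))
    (E' : ℝ) (hE' : E' = -2 * (inner ℝ A B : ℝ)) (hEpos : 0 < E') :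
    (Real.exp T + Real.exp (-T)) / 2 =
      -(inner ℝ w₀ w₁ : ℝ) / (2 * E') +
        Real.sqrt ((‖w₀‖^2 + ‖w₁‖^2) / (2 * E')
          + ((inner ℝ w₀ w₁ : ℝ) / (2 * E'))^2 + 1) := by
  subst hA hB
  rw [← cosh_eq]
  have hrel := energy_mul_cosh_sq_sub_one (sinh_pos_iff.2 hT).ne' w₀ w₁ hE'
  exact eq_neg_div_add_sqrt_of_mul_sq_sub_one (by positivity) (one_le_cosh T)
    (neg_two_inner_le_norm_sq_add_norm_sq w₀ w₁) (by linear_combination hrel)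
end

section
/- Let p₀, p₁ ∈ ℂ ∖ {0} be not antipodally directed, i.e. the origin does not lie on the line segment joining p₀ and p₁ (equivalently, p₁ is not a negative real multiple of p₀). Then there exist w₀, w₁ ∈ ℂ with w₀² = p₀, w₁² = p₁ and Re(w₀ · conj(w₁)) < 0. -/
/-!
Pick any square roots `v₀, v₁` and put `z = v₀ · conj v₁`, so that `z² = p₀ · conj p₁`. If `Re z`
were `0`, then `z²` would be a non-positive real, which puts `p₀` on the ray opposite to `p₁` and
hence `0` on the segment between them. So `Re z ≠ 0`, and replacing `v₀` by `-v₀` if necessary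
makes it negative.
-/

open ComplexConjugate

namespace Complex

lemma zero_mem_segment_of_mul_conj_eq_neg_ofReal {p q : ℂ} {r : ℝ} (hr : 0 ≤ r)
    (h : p * conj q = -r) : (0 : ℂ) ∈ segment ℝ p q := by
  rw [mem_segment_iff_sameRay, zero_sub, sub_zero]
  rcases eq_or_ne q 0 with rfl | hq
  · exact SameRay.zero_right _
  have hnormSq : (normSq q : ℂ) ≠ 0 := by exact_mod_cast normSq_pos.mpr hq |>.ne'
  have hneg : -p = (r / normSq q : ℝ) • q := by
    rw [real_smul, ofReal_div, div_mul_eq_mul_div, eq_div_iff hnormSq, ← mul_conj q]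
    linear_combination -q * h
  rw [hneg]
  exact (SameRay.sameRay_nonneg_smul_right q (div_nonneg hr (normSq_nonneg q))).symm

lemma sq_eq_neg_ofReal_im_sq_of_re_eq_zero {z : ℂ} (h : z.re = 0) :
    z ^ 2 = -((z.im ^ 2 : ℝ) : ℂ) := by
  apply Complex.ext <;> simp [sq, h]

lemma re_mul_conj_ne_zero_of_zero_notMem_segment_sq {v₀ v₁ : ℂ}
    (h : (0 : ℂ) ∉ segment ℝ (v₀ ^ 2) (v₁ ^ 2)) : (v₀ * conj v₁).re ≠ 0 := by
  intro hre
  refine h (zero_mem_segment_of_mul_conj_eq_neg_ofReal (sq_nonneg (v₀ * conj v₁).im) ?_)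
  rw [map_pow, ← mul_pow, sq_eq_neg_ofReal_im_sq_of_re_eq_zero hre]

end Complex

theorem levi_civita_square_root_choice_general (p₀ p₁ : ℂ)
    (hna : (0 : ℂ) ∉ segment ℝ p₀ p₁) :
    ∃ w₀ w₁ : ℂ, w₀ ^ 2 = p₀ ∧ w₁ ^ 2 = p₁ ∧ (w₀ * (starRingEnd ℂ) w₁).re < 0 := by
  obtain ⟨v₀, rfl⟩ := IsAlgClosed.exists_pow_nat_eq p₀ two_pos
  obtain ⟨v₁, rfl⟩ := IsAlgClosed.exists_pow_nat_eq p₁ two_pos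
  rcases (Complex.re_mul_conj_ne_zero_of_zero_notMem_segment_sq hna).lt_or_gt with hneg | hpos
  · exact ⟨v₀, v₁, rfl, rfl, hneg⟩
  · exact ⟨-v₀, v₁, neg_sq v₀, rfl, by rw [neg_mul, Complex.neg_re]; exact neg_neg_of_pos hpos⟩

/-- Levi-Civita double covering: if `p₀, p₁` are nonzero points of the plane (viewed as `ℂ`)
which are not antipodally directed (the origin does not lie on the segment joining them),
then one can choose complex square roots `w₀` of `p₀` and `w₁` of `p₁` whose planar inner
product `Re(w₀ · conj w₁)` is negative. -/
theorem levi_civita_square_root_choice (p₀ p₁ : ℂ) (h₀ : p₀ ≠ 0) (h₁ : p₁ ≠ 0)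
    (hna : (0 : ℂ) ∉ segment ℝ p₀ p₁) :
    ∃ w₀ w₁ : ℂ, w₀ ^ 2 = p₀ ∧ w₁ ^ 2 = p₁ ∧ (w₀ * (starRingEnd ℂ) w₁).re < 0 :=
  levi_civita_square_root_choice_general p₀ p₁ hna
end

section
/- Let E' ∈ ℝ and let w : ℝ → ℂ be twice differentiable with w''(τ) = w(τ) and w(τ) ≠ 0 for all τ, and (1/2)|w'(τ)|² − (1/2)|w(τ)|² = E' for all τ. Define z := w². Then the function g(τ) := z'(τ)/(√2 · |w(τ)|²) is differentiable with g'(τ) = −2√2 · E' · z(τ)/|z(τ)|² for all τ; equivalently, (1/(√2 |w(τ)|²)) · (d/dτ) ( z'(τ)/(√2 |w(τ)|²) ) = −2E' · z(τ)/|z(τ)|³, so that in the rescaled time ds = √2 |w|² dτ the curve z solves the Kepler equation z'' = −2E' z/‖z‖³. -/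
/-!
Since `z' = 2 w w'` and `|w|² = w · conj w`, the rescaled velocity is `g = √2 w' / conj w`.
Differentiating with `w'' = w` gives `g' = √2 (|w|² - |w'|²) / (conj w)²`; the energy turns the
numerator into the constant `-2E'`, and `1 / (conj w)² = z / |z|²`.
-/

open ComplexConjugate

namespace Complex

lemma two_mul_mul_div_sqrt_two_mul_sq_norm {a : ℂ} (ha : a ≠ 0) (v : ℂ) :
    2 * a * v / ((Real.sqrt 2 * ‖a‖ ^ 2 : ℝ) : ℂ) = Real.sqrt 2 * v / conj a := by
  have hsqrt : (Real.sqrt 2 : ℂ) ^ 2 = 2 := by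
    norm_cast; exact Real.sq_sqrt zero_le_two
  have hconj : conj a ≠ 0 := (map_ne_zero _).mpr ha
  have hsqrt_ne : (Real.sqrt 2 : ℂ) ≠ 0 := by simp
  push_cast
  rw [← mul_conj', div_eq_div_iff (mul_ne_zero hsqrt_ne (mul_ne_zero ha hconj)) hconj, ← hsqrt]
  ring

lemma inv_conj_eq_div_ofReal_sq_norm (a : ℂ) : (conj a)⁻¹ = a / ((‖a‖ ^ 2 : ℝ) : ℂ) := by
  rw [← conj_inv, inv_def, map_mul, conj_conj, conj_ofReal, normSq_eq_norm_sq, div_eq_mul_inv,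
    ofReal_inv]

end Complex

open Complex

lemma HasDerivAt.div_conj_of_harmonic_repulsor {w v : ℝ → ℂ} {τ : ℝ}
    (hw : HasDerivAt w (v τ) τ) (hv : HasDerivAt v (w τ) τ) (hne : w τ ≠ 0) :
    HasDerivAt (fun s => v s / conj (w s))
      (((‖w τ‖ ^ 2 - ‖v τ‖ ^ 2 : ℝ) : ℂ) / conj (w τ) ^ 2) τ := by
  have hconj : conj (w τ) ≠ 0 := (map_ne_zero _).mpr hne
  refine (hv.div hw.star hconj).congr_deriv ?_
  push_cast
  simp only [← mul_conj', starRingEnd_apply]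

theorem levi_civita_kepler_equation_general (E' : ℝ) (w : ℝ → ℂ)
    (hw₁ : Differentiable ℝ w)
    (hrep : ∀ τ : ℝ, deriv (deriv w) τ = w τ)
    (hne : ∀ τ : ℝ, w τ ≠ 0)
    (hE : ∀ τ : ℝ, (1/2) * ‖deriv w τ‖^2
      - (1/2) * ‖w τ‖^2 = E') :
    let z : ℝ → ℂ := fun τ => (w τ)^2
    let g : ℝ → ℂ := fun τ => deriv z τ / ((Real.sqrt 2 * ‖w τ‖^2 : ℝ) : ℂ)
    ∀ τ : ℝ, HasDerivAt g
      (((-2 * Real.sqrt 2 * E' : ℝ) : ℂ) * z τ / ((‖z τ‖^2 : ℝ) : ℂ)) τ := by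
  intro z g τ
  have hw (s : ℝ) : HasDerivAt w (deriv w s) s := (hw₁ s).hasDerivAt
  -- `deriv (deriv w) s = w s ≠ 0`, so `deriv w` cannot fail to be differentiable at `s`.
  have hw' (s : ℝ) : HasDerivAt (deriv w) (w s) s := by
    have := (differentiableAt_of_deriv_ne_zero (hrep s ▸ hne s)).hasDerivAt
    rwa [hrep s] at this
  have hg : g = fun s => Real.sqrt 2 * (deriv w s / conj (w s)) := by
    funext s
    have hz : deriv z s = 2 * w s * deriv w s := by
      have : HasDerivAt z _ s := (hw s).pow 2
      rw [this.deriv]; push_cast; ring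
    simp only [g, hz, two_mul_mul_div_sqrt_two_mul_sq_norm (hne s), mul_div_assoc]
  have henergy : ‖w τ‖ ^ 2 - ‖deriv w τ‖ ^ 2 = -2 * E' := by linarith [hE τ]
  rw [hg]
  refine (((hw τ).div_conj_of_harmonic_repulsor (hw' τ) (hne τ)).const_mul
    (Real.sqrt 2 : ℂ)).congr_deriv ?_
  rw [henergy, div_eq_mul_inv, ← inv_pow, inv_conj_eq_div_ofReal_sq_norm]
  simp only [z, norm_pow]
  push_cast
  ring

/-- Levi-Civita transformation: if `w : ℝ → ℂ` is a zero-free solution of the harmonic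
repulsor `w'' = w` with energy `E' = (1/2)|w'|² - (1/2)|w|²`, then, setting `z = w²`,
the function `g(τ) = z'(τ)/(√2 |w(τ)|²)` is differentiable with
`g'(τ) = -2√2 E' z(τ)/|z(τ)|²`; i.e. in the rescaled time `ds = √2 |w|² dτ` the curve `z`
solves the Kepler equation `z'' = -2E' z/‖z‖³`. -/
theorem levi_civita_kepler_equation (E' : ℝ) (w : ℝ → ℂ)
    (hw₁ : Differentiable ℝ w) (hw₂ : Differentiable ℝ (deriv w))
    (hrep : ∀ τ : ℝ, deriv (deriv w) τ = w τ)
    (hne : ∀ τ : ℝ, w τ ≠ 0)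
    (hE : ∀ τ : ℝ, (1/2) * ‖deriv w τ‖^2
      - (1/2) * ‖w τ‖^2 = E') :
    let z : ℝ → ℂ := fun τ => (w τ)^2
    let g : ℝ → ℂ := fun τ => deriv z τ / ((Real.sqrt 2 * ‖w τ‖^2 : ℝ) : ℂ)
    ∀ τ : ℝ, HasDerivAt g
      (((-2 * Real.sqrt 2 * E' : ℝ) : ℂ) * z τ / ((‖z τ‖^2 : ℝ) : ℂ)) τ :=
  levi_civita_kepler_equation_general E' w hw₁ hrep hne hE
end

section
/- Let E' ∈ ℝ and let w : ℝ → ℂ be twice differentiable with w''(τ) = w(τ) and w(τ) ≠ 0 for all τ, and (1/2)|w'(τ)|² − (1/2)|w(τ)|² = E' for all τ. Define z := w². Then for every τ, (1/2) · | z'(τ)/(√2 |w(τ)|²) |² − 2E'/|z(τ)| = 1; i.e. in the rescaled time ds = √2 |w|² dτ the curve z has Keplerian energy 1 with gravitational parameter 2E'. -/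
/-!
Since `z' = 2 w w'`, the Kepler speed `|z'| / (√2 |w|²)` has square `2 |w'|² / |w|²`, and the
energy relation `|w'|² = 2E' + |w|²` turns the Kepler energy into `|w|² / |w|² = 1`.
-/

theorem norm_sq_two_mul_mul_div_sqrt_two_mul_norm_sq {w : ℂ} (hw : w ≠ 0) (v : ℂ) :
    ‖2 * w * v / ((Real.sqrt 2 * ‖w‖ ^ 2 : ℝ) : ℂ)‖ ^ 2 = 2 * ‖v‖ ^ 2 / ‖w‖ ^ 2 := by
  have hw' : ‖w‖ ≠ 0 := norm_ne_zero_iff.mpr hw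
  rw [norm_div, Complex.norm_real, Real.norm_of_nonneg (by positivity), norm_mul, norm_mul,
    Complex.norm_two, div_pow, mul_pow, mul_pow, mul_pow, Real.sq_sqrt zero_le_two]
  field_simp

theorem levi_civita_kepler_energy_eq_one {w : ℂ} (hw : w ≠ 0) {v : ℂ} {E' : ℝ}
    (hE : (1/2) * ‖v‖ ^ 2 - (1/2) * ‖w‖ ^ 2 = E') :
    (1/2) * ‖2 * w * v / ((Real.sqrt 2 * ‖w‖ ^ 2 : ℝ) : ℂ)‖ ^ 2 - 2 * E' / ‖w ^ 2‖ = 1 := by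
  have hw' : ‖w‖ ≠ 0 := norm_ne_zero_iff.mpr hw
  rw [norm_sq_two_mul_mul_div_sqrt_two_mul_norm_sq hw, norm_pow, ← hE]
  field_simp
  ring

theorem levi_civita_kepler_energy_general (E' : ℝ) (w : ℝ → ℂ)
    (hw₁ : Differentiable ℝ w)
    (hne : ∀ τ : ℝ, w τ ≠ 0)
    (hE : ∀ τ : ℝ, (1/2) * ‖deriv w τ‖^2
      - (1/2) * ‖w τ‖^2 = E') :
    let z : ℝ → ℂ := fun τ => (w τ)^2
    ∀ τ : ℝ,
      (1/2) * (‖deriv z τ / ((Real.sqrt 2 * ‖w τ‖^2 : ℝ) : ℂ)‖)^2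
        - 2 * E' / ‖z τ‖ = 1 := by
  intro z τ
  have hz : deriv z τ = 2 * w τ * deriv w τ := by
    rw [deriv_fun_pow (hw₁ τ)]
    norm_num
  rw [hz]
  exact levi_civita_kepler_energy_eq_one (hne τ) (hE τ)

/-- Levi-Civita transformation, energy relation: if `w : ℝ → ℂ` is a zero-free solution of
the harmonic repulsor `w'' = w` with energy `E' = (1/2)|w'|² - (1/2)|w|²`, then, setting
`z = w²`, for every `τ` one has `(1/2)|z'(τ)/(√2 |w(τ)|²)|² - 2E'/|z(τ)| = 1`; i.e. in
the rescaled time `ds = √2 |w|² dτ` the curve `z` has Keplerian energy `1` with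
gravitational parameter `2E'`. -/
theorem levi_civita_kepler_energy (E' : ℝ) (w : ℝ → ℂ)
    (hw₁ : Differentiable ℝ w) (hw₂ : Differentiable ℝ (deriv w))
    (hrep : ∀ τ : ℝ, deriv (deriv w) τ = w τ)
    (hne : ∀ τ : ℝ, w τ ≠ 0)
    (hE : ∀ τ : ℝ, (1/2) * ‖deriv w τ‖^2
      - (1/2) * ‖w τ‖^2 = E') :
    let z : ℝ → ℂ := fun τ => (w τ)^2
    ∀ τ : ℝ,
      (1/2) * (‖deriv z τ / ((Real.sqrt 2 * ‖w τ‖^2 : ℝ) : ℂ)‖)^2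
        - 2 * E' / ‖z τ‖ = 1 :=
  levi_civita_kepler_energy_general E' w hw₁ hne hE
end

section
/- Fix 𝓔, ω > 0, a vector u ∈ ℝ² with ‖u‖ = 1, and r₀ with 0 < r₀ < √(2𝓔)/ω. Set β := √(2𝓔/ω² − r₀²), z(s) := (r₀ cos(ωs) + β sin(ωs)) · u, and T := (2/ω) · arctan(β/r₀). Then: (i) z''(s) = −ω² z(s) for all s; (ii) (1/2)‖z'(s)‖² − 𝓔 + (ω²/2)‖z(s)‖² = 0 for all s (zero-energy condition for the outer potential); (iii) z(0) = z(T) = r₀·u; (iv) z'(T) = −z'(0); (v) ‖z(s)‖ > r₀ for all s ∈ (0, T). -/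
/-!
Writing `r₀ cos θ + β sin θ = R cos (θ - φ)` with `R = √(r₀² + β²)` and `φ = arctan (β / r₀)`,
the arc is `z s = R cos (ω s - φ) • u`: a harmonic oscillation along `u` whose energy is
`ω² R² / 2 = 𝓔`, symmetric about `s = φ / ω = T / 2`. The symmetry `ω s - φ ↦ φ - (ω s - φ)`
exchanges `s = 0` and `s = T`, and on `(0, T)` the phase satisfies `|ω s - φ| < φ < π / 2`,
so `R cos (ω s - φ) > R cos φ = r₀`.
-/

open Real

theorem Real.mul_cos_add_mul_sin_eq_sqrt_mul_cos_sub_arctan {a : ℝ} (ha : 0 < a) (b θ : ℝ) :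
    a * cos θ + b * sin θ = √(a ^ 2 + b ^ 2) * cos (θ - arctan (b / a)) := by
  have hR : √(a ^ 2 + b ^ 2) = a * √(1 + (b / a) ^ 2) := by
    rw [show a ^ 2 + b ^ 2 = a ^ 2 * (1 + (b / a) ^ 2) by field_simp,
      Real.sqrt_mul (sq_nonneg a), Real.sqrt_sq ha.le]
  have hpos : 0 < √(1 + (b / a) ^ 2) := Real.sqrt_pos.mpr (by positivity)
  rw [cos_sub, cos_arctan, sin_arctan, hR]
  field_simp

theorem Real.cos_lt_cos_sub_of_mem_Ioo {φ θ : ℝ} (hφ : φ ≤ π) (hθ : θ ∈ Set.Ioo 0 (2 * φ)) :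
    cos φ < cos (θ - φ) := by
  rw [← cos_abs (θ - φ)]
  refine cos_lt_cos_of_nonneg_of_le_pi (abs_nonneg _) hφ (abs_lt.mpr ⟨?_, ?_⟩) <;>
    linarith [hθ.1, hθ.2]

section HarmonicCurve

variable {E : Type*} [NormedAddCommGroup E] [NormedSpace ℝ E]

theorem deriv_mul_cos_sub_smul (R ω φ : ℝ) (u : E) :
    deriv (fun t => (R * cos (ω * t - φ)) • u) = fun s => (-(ω * R) * sin (ω * s - φ)) • u := by
  funext s
  have h := (((hasDerivAt_id s).const_mul ω).sub_const φ).cos.const_mul R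
  exact ((h.smul_const u).congr_deriv (by simp only [id]; ring_nf)).deriv

theorem deriv_mul_sin_sub_smul (R ω φ : ℝ) (u : E) :
    deriv (fun t => (R * sin (ω * t - φ)) • u) = fun s => (ω * R * cos (ω * s - φ)) • u := by
  funext s
  have h := (((hasDerivAt_id s).const_mul ω).sub_const φ).sin.const_mul R
  exact ((h.smul_const u).congr_deriv (by simp only [id]; ring_nf)).deriv

theorem deriv_deriv_mul_cos_sub_smul (R ω φ : ℝ) (u : E) (s : ℝ) :
    deriv (deriv fun t => (R * cos (ω * t - φ)) • u) s = (-ω ^ 2) • (R * cos (ω * s - φ)) • u := by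
  rw [deriv_mul_cos_sub_smul, deriv_mul_sin_sub_smul, smul_smul]
  ring_nf

theorem norm_sq_smul_of_norm_eq_one {u : E} (hu : ‖u‖ = 1) (c : ℝ) : ‖c • u‖ ^ 2 = c ^ 2 := by
  rw [norm_smul, hu, mul_one, Real.norm_eq_abs, sq_abs]

theorem energy_mul_cos_sub_smul (R ω φ : ℝ) {u : E} (hu : ‖u‖ = 1) (s : ℝ) :
    (1 / 2) * ‖deriv (fun t => (R * cos (ω * t - φ)) • u) s‖ ^ 2
      + (ω ^ 2 / 2) * ‖(R * cos (ω * s - φ)) • u‖ ^ 2 = ω ^ 2 * R ^ 2 / 2 := by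
  rw [deriv_mul_cos_sub_smul, norm_sq_smul_of_norm_eq_one hu, norm_sq_smul_of_norm_eq_one hu]
  linear_combination (ω ^ 2 * R ^ 2 / 2) * sin_sq_add_cos_sq (ω * s - φ)

end HarmonicCurve

theorem homothetic_outer_arc_general (𝓔 ω : ℝ) (hω : 0 < ω)
    (u : EuclideanSpace ℝ (Fin 2)) (hu : ‖u‖ = 1)
    (r₀ : ℝ) (hr₀ : 0 < r₀) (hr₀' : r₀ < Real.sqrt (2 * 𝓔) / ω) :
    let β : ℝ := Real.sqrt (2 * 𝓔 / ω^2 - r₀^2)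
    let z : ℝ → EuclideanSpace ℝ (Fin 2) :=
      fun s => (r₀ * Real.cos (ω * s) + β * Real.sin (ω * s)) • u
    let T : ℝ := (2 / ω) * Real.arctan (β / r₀)
    (∀ s : ℝ, deriv (deriv z) s = (-ω^2) • z s) ∧
    (∀ s : ℝ, (1/2) * ‖deriv z s‖^2 - 𝓔 + (ω^2/2) * ‖z s‖^2 = 0) ∧
    (z 0 = r₀ • u ∧ z T = r₀ • u) ∧
    (deriv z T = -(deriv z 0)) ∧
    (∀ s ∈ Set.Ioo (0:ℝ) T, r₀ < ‖z s‖) := by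
  intro β z T
  set φ := arctan (β / r₀)
  set R := √(r₀ ^ 2 + β ^ 2)
  have hr₀ω : (r₀ * ω) ^ 2 < 2 * 𝓔 := (Real.lt_sqrt (by positivity)).mp ((lt_div_iff₀ hω).mp hr₀')
  have hβ : β ^ 2 = 2 * 𝓔 / ω ^ 2 - r₀ ^ 2 :=
    Real.sq_sqrt (sub_nonneg.mpr ((le_div_iff₀ (by positivity)).mpr (by linarith)))
  have hz : z = fun s => (R * cos (ω * s - φ)) • u := funext fun s =>
    congrArg (· • u) (Real.mul_cos_add_mul_sin_eq_sqrt_mul_cos_sub_arctan hr₀ β (ω * s))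
  have hr₀R : r₀ = R * cos φ := by
    simpa using Real.mul_cos_add_mul_sin_eq_sqrt_mul_cos_sub_arctan hr₀ β 0
  have hωT : ω * T - φ = φ := by
    simp only [T]; field_simp; ring
  have hRpos : 0 < R := Real.sqrt_pos.mpr (by positivity)
  rw [hz]
  refine ⟨deriv_deriv_mul_cos_sub_smul R ω φ u, fun s => ?_, ⟨?_, ?_⟩, ?_, fun s hs => ?_⟩
  · have hωR : ω ^ 2 * R ^ 2 = 2 * 𝓔 := by
      rw [Real.sq_sqrt (by positivity), hβ]; field_simp; ring
    linear_combination energy_mul_cos_sub_smul R ω φ hu s + hωR / 2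
  · simp [hr₀R]
  · beta_reduce
    rw [hωT, ← hr₀R]
  · simp [deriv_mul_cos_sub_smul, hωT]
  · have hφ : φ ≤ π := by linarith [arctan_lt_pi_div_two (β / r₀), pi_pos]
    have hωs : ω * s < 2 * φ := by linarith [mul_lt_mul_of_pos_left hs.2 hω]
    have hlt : cos φ < cos (ω * s - φ) :=
      Real.cos_lt_cos_sub_of_mem_Ioo hφ ⟨mul_pos hω hs.1, hωs⟩
    calc r₀ = R * cos φ := hr₀R
      _ < R * cos (ω * s - φ) := mul_lt_mul_of_pos_left hlt hRpos
      _ ≤ ‖(R * cos (ω * s - φ)) • u‖ := by rw [norm_smul, hu, mul_one]; exact le_abs_self _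

/-- The explicit radial (homothetic) zero-energy outer arc for the potential
`V_E(z) = 𝓔 - (ω²/2)‖z‖²`: with `β = √(2𝓔/ω² - r₀²)`,
`z(s) = (r₀ cos(ωs) + β sin(ωs)) u` and `T = (2/ω) arctan(β/r₀)`, the curve `z` solves
`z'' = -ω² z` with zero energy, leaves the circle of radius `r₀` in the unit direction `u`
at `s = 0`, returns to the same point at `s = T` with reversed velocity, and stays outside
the circle of radius `r₀` for `s ∈ (0, T)`. -/
theorem homothetic_outer_arc (𝓔 ω : ℝ) (h𝓔 : 0 < 𝓔) (hω : 0 < ω)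
    (u : EuclideanSpace ℝ (Fin 2)) (hu : ‖u‖ = 1)
    (r₀ : ℝ) (hr₀ : 0 < r₀) (hr₀' : r₀ < Real.sqrt (2 * 𝓔) / ω) :
    let β : ℝ := Real.sqrt (2 * 𝓔 / ω^2 - r₀^2)
    let z : ℝ → EuclideanSpace ℝ (Fin 2) :=
      fun s => (r₀ * Real.cos (ω * s) + β * Real.sin (ω * s)) • u
    let T : ℝ := (2 / ω) * Real.arctan (β / r₀)
    (∀ s : ℝ, deriv (deriv z) s = (-ω^2) • z s) ∧
    (∀ s : ℝ, (1/2) * ‖deriv z s‖^2 - 𝓔 + (ω^2/2) * ‖z s‖^2 = 0) ∧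
    (z 0 = r₀ • u ∧ z T = r₀ • u) ∧
    (deriv z T = -(deriv z 0)) ∧
    (∀ s ∈ Set.Ioo (0:ℝ) T, r₀ < ‖z s‖) :=
  homothetic_outer_arc_general 𝓔 ω hω u hu r₀ hr₀ hr₀'
end
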